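/- Let α ≥ 0 and let b : ℝ × ℝ → ℝ be smooth with b(r,λ) > 0 everywhere; write primes for ∂/∂r, and set Q := 2/b − (b′)²/b² + (b′)⁴/(4b³) − (b′)²b″/(2b²) + (b″)²/(2b). Suppose b satisfies the RG-2 angular evolution equation ∂_λ b = −2(1 − b″/2) − (α/2)Q, and that the scalar curvature R := 2/b + (b′)²/(2b²) − 2b″/b is nonnegative at a point. Then at that point the area A := 4πb of the sphere satisfies ∂_λ A ≤ −C/4, where C := 4π(4b − (b′)²)/b is the compactness. -/

import Mathlib

/-- The radial partial derivative `∂g/∂r` of a function `g(r,λ)` of two variables. -/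
noncomputable def dr (g : ℝ → ℝ → ℝ) (r l : ℝ) : ℝ := deriv (fun s => g s l) r

/-- The quadratic curvature contraction
`Q = 2/b − b′²/b² + b′⁴/(4b³) − b′²b″/(2b²) + b″²/(2b)` of the `b`-form metric. -/
noncomputable def Qquad (b : ℝ → ℝ → ℝ) (r l : ℝ) : ℝ :=
  2 / b r l - (dr b r l) ^ 2 / (b r l) ^ 2 + (dr b r l) ^ 4 / (4 * (b r l) ^ 3)
    - (dr b r l) ^ 2 * dr (dr b) r l / (2 * (b r l) ^ 2)
    + (dr (dr b) r l) ^ 2 / (2 * b r l)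

/-- Under the RG-2 angular evolution `∂_λ b = −2(1 − b″/2) − (α/2)Q`, at any point
where the scalar curvature `R = 2/b + b′²/(2b²) − 2b″/b` is nonnegative, the area
`A = 4πb` satisfies `∂_λ A ≤ −C/4` with `C = 4π(4b − b′²)/b` the compactness
(Theorem 3.1 / Corollary 3.2 of the paper, spherically symmetric case). -/
theorem rg2_area_compactness_bound
    (α : ℝ) (hα : 0 ≤ α) (b : ℝ → ℝ → ℝ)
    (hb : ContDiff ℝ (⊤ : ℕ∞) (Function.uncurry b))
    (hbpos : ∀ r l, 0 < b r l)
    (hflow : ∀ r l, deriv (fun t => b r t) l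
      = -2 * (1 - dr (dr b) r l / 2) - (α / 2) * Qquad b r l)
    (r₀ l₀ : ℝ)
    (hR : 0 ≤ 2 / b r₀ l₀ + (dr b r₀ l₀) ^ 2 / (2 * (b r₀ l₀) ^ 2)
      - 2 * dr (dr b) r₀ l₀ / b r₀ l₀) :
    deriv (fun t => 4 * Real.pi * b r₀ t) l₀
      ≤ -(4 * Real.pi * (4 * b r₀ l₀ - (dr b r₀ l₀) ^ 2) / b r₀ l₀) / 4 := by
  have hdiff : DifferentiableAt ℝ (fun t => b r₀ t) l₀ := by
    have : DifferentiableAt ℝ (Function.uncurry b ∘ fun t => (r₀, t)) l₀ :=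
      ((hb.differentiable (by simp)) _).comp _
        (DifferentiableAt.prodMk (differentiableAt_const _) differentiableAt_id)
    exact this
  have hd : deriv (fun t => 4 * Real.pi * b r₀ t) l₀
      = 4 * Real.pi * deriv (fun t => b r₀ t) l₀ := by
    exact deriv_const_mul _ hdiff
  rw [hd, hflow r₀ l₀]
  set B := b r₀ l₀ with hB
  set p := dr b r₀ l₀ with hp
  set q := dr (dr b) r₀ l₀ with hq
  have hBpos : 0 < B := hbpos r₀ l₀
  have hπ : 0 < Real.pi := Real.pi_pos
  -- Q ≥ 0
  have hQ : 0 ≤ Qquad b r₀ l₀ := by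
    have hQeq : Qquad b r₀ l₀
        = (4 * B - p ^ 2) ^ 2 / (8 * B ^ 3) + (q - p ^ 2 / (2 * B)) ^ 2 / (2 * B) := by
      unfold Qquad
      rw [← hq, ← hp, ← hB]
      field_simp
      ring
    rw [hQeq]
    positivity
  -- R ≥ 0 multiplied out: 4q ≤ 4 + p²/B
  have hR' : 4 * q * B ≤ 4 * B + p ^ 2 := by
    have h2 : 0 ≤ (2 / B + p ^ 2 / (2 * B ^ 2) - 2 * q / B) * (2 * B ^ 2) := by
      apply mul_nonneg hR; positivity
    have : (2 / B + p ^ 2 / (2 * B ^ 2) - 2 * q / B) * (2 * B ^ 2)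
        = 4 * B + p ^ 2 - 4 * q * B := by field_simp; ring
    linarith [this ▸ h2]
  have hαQ : 0 ≤ (α / 2) * Qquad b r₀ l₀ := by positivity
  have key : (-2 * (1 - q / 2) - (α / 2) * Qquad b r₀ l₀) * B
      ≤ (-(4 * B - p ^ 2) / 4) := by
    have h1 : (-2 * (1 - q / 2)) * B ≤ -(4 * B - p ^ 2) / 4 := by nlinarith
    nlinarith [mul_pos hBpos hBpos]
  calc 4 * Real.pi * (-2 * (1 - q / 2) - (α / 2) * Qquad b r₀ l₀)
      ≤ 4 * Real.pi * ((-(4 * B - p ^ 2) / 4) / B) := by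
        apply mul_le_mul_of_nonneg_left _ (by positivity)
        rw [le_div_iff₀ hBpos]; exact key
    _ = -(4 * Real.pi * (4 * B - p ^ 2) / B) / 4 := by ring
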